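/- Let K be a locally finitely presentable category and T, S finitary monads on K whose coproduct T ⊔ S is algebraic, i.e. K^{T⊔S} ≅ K^T ×_K K^S over K. Then the projection functor p₁ : K^T ×_K K^S → K^S is monadic. -/

import Mathlib

/-!
Since `K` is cocomplete and `R` preserves colimits of `ℕ`-chains, `K^R` has coequalizers. To
coequalize `f, g : X ⇉ Y`, start from `p₀ := Y.a ≫ coeq(f.f, g.f) : R Y.A ⟶ E₀` and put
`Eₙ₊₁ := coeq(R pₙ, μ ≫ pₙ ≫ η)`, a quotient `pₙ₊₁` of `R Eₙ`. The `pₙ₊₁` induce an `R`-action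
on the colimit of the chain `η ≫ pₙ₊₁ : Eₙ ⟶ Eₙ₊₁`, because `R` preserves that colimit.

Transporting along `K^R ≌ K^T ×_K K^S`, the pullback has coequalizers and
`π₂ ⋙ U^S ≅ e.inverse ⋙ U^R` is monadic. The adjoint triangle theorem then gives `π₂` a left
adjoint, and Beck's theorem shows that a right adjoint `G` is monadic when `V` and `G ⋙ V` are.
-/

open CategoryTheory Limits Opposite

universe w w' v v₁ v₂ v₃ u u₁ u₂ u₃

namespace Formal

section Pullback

variable {A : Type u₁} {B : Type u₂} {K : Type u₃}
  [Category.{v₁} A] [Category.{v₂} B] [Category.{v₃} K]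

/-- The strict pullback of two functors in the category of categories:
objects are pairs `(a, b)` with `U.obj a = V.obj b`. -/
structure CatPullback (U : A ⥤ K) (V : B ⥤ K) : Type max u₁ u₂ where
  left : A
  right : B
  w : U.obj left = V.obj right

@[ext]
structure CatPullbackHom {U : A ⥤ K} {V : B ⥤ K} (X Y : CatPullback U V) where
  fl : X.left ⟶ Y.left
  fr : X.right ⟶ Y.right
  w : U.map fl ≫ eqToHom Y.w = eqToHom X.w ≫ V.map fr

instance (U : A ⥤ K) (V : B ⥤ K) : Category (CatPullback U V) where
  Hom := CatPullbackHom
  id X := ⟨𝟙 _, 𝟙 _, by simp⟩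
  comp f g := ⟨f.fl ≫ g.fl, f.fr ≫ g.fr, by
    rw [Functor.map_comp, Functor.map_comp, Category.assoc, g.w, ← Category.assoc, f.w,
      Category.assoc]⟩

/-- First projection of the pullback of categories. -/
def CatPullback.π₁ (U : A ⥤ K) (V : B ⥤ K) : CatPullback U V ⥤ A where
  obj X := X.left
  map f := f.fl

/-- Second projection of the pullback of categories. -/
def CatPullback.π₂ (U : A ⥤ K) (V : B ⥤ K) : CatPullback U V ⥤ B where
  obj X := X.right
  map f := f.fr

/-- The diagonal of the pullback square of categories. -/
def CatPullback.diag (U : A ⥤ K) (V : B ⥤ K) : CatPullback U V ⥤ K :=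
  CatPullback.π₁ U V ⋙ U

end Pullback

section LFP

variable {C : Type u} [Category.{v} C]

/-- An object is finitely presentable if its covariant hom-functor preserves
filtered colimits. -/
def FinitelyPresentable (X : C) : Prop :=
  PreservesFilteredColimitsOfSize.{v, v} (coyoneda.obj (op X))

/-- A category is locally finitely presentable if it is cocomplete and has a small
detecting (strong generating) set of finitely presentable objects. -/
def LocallyFinitelyPresentable (C : Type u) [Category.{v} C] : Prop :=
  HasColimitsOfSize.{v, v} C ∧
    ∃ S : Set C, Small.{v} S ∧ (∀ X ∈ S, FinitelyPresentable X) ∧ ObjectProperty.IsDetecting S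

/-- A monad is finitary if its underlying endofunctor preserves filtered colimits. -/
def Monad.Finitary (T : CategoryTheory.Monad C) : Prop :=
  PreservesFilteredColimitsOfSize.{v, v} (T : C ⥤ C)

end LFP
section Cardinal

variable {C : Type u} [Category.{v} C] {D : Type u₁} [Category.{v₁} D]

/-- A category is `κ`-filtered if every diagram of size `< κ` admits a cocone. -/
def IsCardinalFiltered (J : Type u) [Category.{v} J] (κ : Cardinal.{w}) : Prop :=
  ∀ (D : Type w) [SmallCategory D], Cardinal.mk (Σ X Y : D, X ⟶ Y) < κ →
    ∀ F : D ⥤ J, Nonempty (Cocone F)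

/-- A functor preserves `κ`-filtered colimits. -/
def PreservesCardinalFilteredColimits (F : C ⥤ D) (κ : Cardinal.{w}) : Prop :=
  ∀ (J : Type w) [SmallCategory J], IsCardinalFiltered J κ → PreservesColimitsOfShape J F

/-- An object is `κ`-presentable if its hom-functor preserves `κ`-filtered colimits. -/
def CardinalPresentable (X : C) (κ : Cardinal.{v}) : Prop :=
  PreservesCardinalFilteredColimits (coyoneda.obj (op X)) κ

/-- A category is locally `κ`-presentable if it is cocomplete and has a small detecting
(strong generating) set of `κ`-presentable objects. -/
def LocallyCardinalPresentable (C : Type u) [Category.{v} C] (κ : Cardinal.{v}) : Prop :=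
  HasColimitsOfSize.{v, v} C ∧
    ∃ S : Set C, Small.{v} S ∧ (∀ X ∈ S, CardinalPresentable X κ) ∧ ObjectProperty.IsDetecting S

/-- A category is locally presentable if it is locally `κ`-presentable for some
regular cardinal `κ`. -/
def LocallyPresentable (C : Type u) [Category.{v} C] : Prop :=
  ∃ κ : Cardinal.{v}, κ.IsRegular ∧ LocallyCardinalPresentable C κ

end Cardinal

namespace AlgebraicQuotient

variable {C : Type u} [Category.{v} C] {M : CategoryTheory.Monad C}

lemma unit_map_comp_a {W : M.Algebra} {Z : C} (h : Z ⟶ W.A) : M.η.app Z ≫ M.map h ≫ W.a = h := by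
  rw [← M.unit_naturality_assoc _ h, W.unit, Category.comp_id]

structure Stage (M : CategoryTheory.Monad C) where
  src : C
  tgt : C
  proj : M.obj src ⟶ tgt

namespace Stage

variable (s : Stage M)

/-- `s.proj ≫ h` is an algebra map out of the free algebra on `s.src`. -/
def Compatible {W : M.Algebra} (h : s.tgt ⟶ W.A) : Prop :=
  M.map (s.proj ≫ h) ≫ W.a = M.μ.app s.src ≫ s.proj ≫ h

variable [HasCoequalizers C]

noncomputable abbrev next : Stage M where
  src := s.tgt
  tgt := coequalizer (M.map s.proj) (M.μ.app s.src ≫ s.proj ≫ M.η.app s.tgt)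
  proj := coequalizer.π _ _

lemma next_condition :
    M.map s.proj ≫ s.next.proj =
      M.μ.app s.src ≫ s.proj ≫ M.η.app s.tgt ≫ s.next.proj := by
  simpa using coequalizer.condition (M.map s.proj) (M.μ.app s.src ≫ s.proj ≫ M.η.app s.tgt)

noncomputable def step : s.tgt ⟶ s.next.tgt := M.η.app s.tgt ≫ s.next.proj

/-- Written with `Nat.rec` so that `s.iter (n + 1)` and `(s.iter n).next` agree reducibly. -/
noncomputable abbrev iter (n : ℕ) : Stage M := Nat.rec s (fun _ t => t.next) n

section DescNext

variable {s} {W : M.Algebra} {h : s.tgt ⟶ W.A} (hh : s.Compatible h)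
include hh

noncomputable def descNext : s.next.tgt ⟶ W.A :=
  coequalizer.desc (M.map h ≫ W.a) <| by
    rw [Category.assoc, Category.assoc, unit_map_comp_a h, ← hh, Functor.map_comp,
      Category.assoc]

lemma proj_descNext : s.next.proj ≫ descNext hh = M.map h ≫ W.a :=
  coequalizer.π_desc _ _

lemma step_descNext : s.step ≫ descNext hh = h := by
  rw [step, Category.assoc, proj_descNext, unit_map_comp_a h]

lemma compatible_descNext : s.next.Compatible (descNext hh) := by
  rw [Compatible, proj_descNext, Functor.map_comp, Category.assoc, ← W.assoc,
    ← M.mu_naturality_assoc]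

end DescNext

noncomputable def liftSeq {W : M.Algebra} {h : s.tgt ⟶ W.A} (hh : s.Compatible h) :
    (n : ℕ) → {g : (s.iter n).tgt ⟶ W.A // (s.iter n).Compatible g}
  | 0 => ⟨h, hh⟩
  | n + 1 => ⟨descNext (liftSeq hh n).2, compatible_descNext (liftSeq hh n).2⟩

noncomputable def chain : ℕ ⥤ C := Functor.ofSequence fun n => (s.iter n).step

lemma chain_map_succ (n : ℕ) : s.chain.map (homOfLE (n.le_add_right 1)) = (s.iter n).step :=
  Functor.ofSequence_map_homOfLE_succ _ n

variable [HasColimitsOfShape ℕ C]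

noncomputable def ι (n : ℕ) : (s.iter n).tgt ⟶ colimit s.chain := colimit.ι s.chain n

lemma step_ι (n : ℕ) : (s.iter n).step ≫ s.ι (n + 1) = s.ι n := by
  rw [← s.chain_map_succ]
  exact colimit.w s.chain _

lemma map_proj_proj_ι (n : ℕ) :
    M.map (s.iter n).proj ≫ (s.iter n).next.proj ≫ s.ι (n + 1) =
      M.μ.app _ ≫ (s.iter n).proj ≫ s.ι n := by
  rw [← Category.assoc, (s.iter n).next_condition, ← s.step_ι n]
  simp only [step, Category.assoc]

lemma map_step_proj_ι (n : ℕ) :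
    M.map (s.iter n).step ≫ (s.iter (n + 1)).next.proj ≫ s.ι (n + 2) =
      (s.iter n).next.proj ≫ s.ι (n + 1) := by
  rw [step, Functor.map_comp, Category.assoc, s.map_proj_proj_ι (n + 1), M.right_unit_assoc]

section Lift

variable {W : M.Algebra} {h : s.tgt ⟶ W.A} (hh : s.Compatible h)

noncomputable def liftHom : colimit s.chain ⟶ W.A :=
  colimit.desc s.chain
    { pt := W.A
      ι := NatTrans.ofSequence (fun n => (s.liftSeq hh n).1) fun n => by
        rw [chain_map_succ]
        exact (step_descNext (s.liftSeq hh n).2).trans (Category.comp_id _).symm }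

lemma ι_liftHom (n : ℕ) : s.ι n ≫ s.liftHom hh = (s.liftSeq hh n).1 :=
  colimit.ι_desc _ _

end Lift

variable [PreservesColimitsOfShape ℕ M.toFunctor]

noncomputable def isColimitMapCocone : IsColimit (M.mapCocone (colimit.cocone s.chain)) :=
  isColimitOfPreserves _ (colimit.isColimit _)

noncomputable def actionCocone : Cocone (s.chain ⋙ M.toFunctor) where
  pt := colimit s.chain
  ι := NatTrans.ofSequence (fun n => (s.iter n).next.proj ≫ s.ι (n + 1)) fun n => by
    rw [Functor.comp_map, chain_map_succ]
    exact (s.map_step_proj_ι n).trans (Category.comp_id _).symm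

noncomputable def action : M.obj (colimit s.chain) ⟶ colimit s.chain :=
  s.isColimitMapCocone.desc s.actionCocone

lemma map_ι_action (n : ℕ) :
    M.map (s.ι n) ≫ s.action = (s.iter n).next.proj ≫ s.ι (n + 1) :=
  s.isColimitMapCocone.fac s.actionCocone n

lemma map_proj_ι_action :
    M.map (s.proj ≫ s.ι 0) ≫ s.action = M.μ.app s.src ≫ s.proj ≫ s.ι 0 := by
  rw [Functor.map_comp, Category.assoc, map_ι_action]
  exact s.map_proj_proj_ι 0

noncomputable abbrev algebra : M.Algebra where
  A := colimit s.chain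
  a := s.action
  unit := colimit.hom_ext fun n => by
    change s.ι n ≫ _ = s.ι n ≫ _
    rw [M.unit_naturality_assoc, map_ι_action, Category.comp_id, ← s.step_ι n, step,
      Category.assoc]
  assoc := (isColimitOfPreserves M.toFunctor s.isColimitMapCocone).hom_ext fun n => by
    change M.map (M.map (s.ι n)) ≫ _ = M.map (M.map (s.ι n)) ≫ _
    rw [M.mu_naturality_assoc, map_ι_action, ← Functor.map_comp_assoc, map_ι_action,
      Functor.map_comp_assoc, map_ι_action, s.map_proj_proj_ι (n + 1)]

noncomputable def lift {W : M.Algebra} {h : s.tgt ⟶ W.A} (hh : s.Compatible h) :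
    s.algebra ⟶ W where
  f := s.liftHom hh
  h := s.isColimitMapCocone.hom_ext fun n => by
    change M.map (s.ι n) ≫ _ = M.map (s.ι n) ≫ s.action ≫ _
    rw [← Functor.map_comp_assoc, ι_liftHom, ← Category.assoc, map_ι_action, Category.assoc,
      s.ι_liftHom hh (n + 1)]
    exact (proj_descNext (s.liftSeq hh n).2).symm

lemma ι_lift {W : M.Algebra} {h : s.tgt ⟶ W.A} (hh : s.Compatible h) :
    s.ι 0 ≫ (s.lift hh).f = h :=
  s.ι_liftHom hh 0

lemma hom_ext {W : M.Algebra} {m m' : s.algebra ⟶ W} (h₀ : s.ι 0 ≫ m.f = s.ι 0 ≫ m'.f) :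
    m = m' := by
  ext : 1
  refine colimit.hom_ext fun n => ?_
  change s.ι n ≫ _ = s.ι n ≫ _
  induction n with
  | zero => exact h₀
  | succ n ih =>
    rw [← cancel_epi (s.iter n).next.proj, ← Category.assoc, ← Category.assoc,
      ← map_ι_action, Category.assoc, Category.assoc]
    change M.map (s.ι n) ≫ s.algebra.a ≫ m.f = M.map (s.ι n) ≫ s.algebra.a ≫ m'.f
    rw [← m.h, ← m'.h, ← Functor.map_comp_assoc, ← Functor.map_comp_assoc, ih]

end Stage

section Coequalizer

variable {X Y : M.Algebra} {f g : X ⟶ Y}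

lemma cofork_condition_f (t : Cofork f g) : f.f ≫ t.π.f = g.f ≫ t.π.f :=
  congrArg Monad.Algebra.Hom.f t.condition

variable [HasCoequalizers C] (f g)

noncomputable abbrev coequalizerStage : Stage M :=
  ⟨Y.A, coequalizer f.f g.f, Y.a ≫ coequalizer.π f.f g.f⟩

lemma compatible_desc (t : Cofork f g) :
    (coequalizerStage f g).Compatible (W := t.pt)
      (coequalizer.desc t.π.f (cofork_condition_f t)) := by
  rw [Stage.Compatible, Category.assoc, coequalizer.π_desc, Functor.map_comp_assoc, t.π.h,
    ← Y.assoc_assoc]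

variable [HasColimitsOfShape ℕ C] [PreservesColimitsOfShape ℕ M.toFunctor]

noncomputable def coequalizerπ : Y ⟶ (coequalizerStage f g).algebra where
  f := coequalizer.π f.f g.f ≫ (coequalizerStage f g).ι 0
  h := by
    calc _ = M.map (M.η.app Y.A) ≫ M.map ((Y.a ≫ coequalizer.π f.f g.f) ≫
          (coequalizerStage f g).ι 0) ≫ (coequalizerStage f g).action := by
          rw [← Functor.map_comp_assoc, Category.assoc, Y.unit_assoc]
      _ = _ := by
          rw [(coequalizerStage f g).map_proj_ι_action]
          exact (M.right_unit_assoc ..).trans (Category.assoc ..)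

lemma coequalizerπ_condition : f ≫ coequalizerπ f g = g ≫ coequalizerπ f g := by
  ext : 1
  exact coequalizer.condition_assoc f.f g.f _

noncomputable def isColimitCoequalizerCofork :
    IsColimit (Cofork.ofπ (coequalizerπ f g) (coequalizerπ_condition f g)) :=
  Cofork.IsColimit.mk _ (fun t => (coequalizerStage f g).lift (compatible_desc f g t))
    (fun t => by
      ext : 1
      change (coequalizer.π f.f g.f ≫ _) ≫ _ = _
      rw [Category.assoc, Stage.ι_lift, coequalizer.π_desc])
    (fun t m hm => Stage.hom_ext _ <| by
      rw [Stage.ι_lift, ← cancel_epi (coequalizer.π f.f g.f), coequalizer.π_desc, ← hm,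
        Monad.Algebra.comp_f, ← Category.assoc]
      rfl)

instance : HasCoequalizer f g := HasColimit.mk ⟨_, isColimitCoequalizerCofork f g⟩

instance : HasCoequalizers M.Algebra :=
  hasCoequalizers_of_hasColimit_parallelPair _

end Coequalizer

end AlgebraicQuotient

section Monadicity

variable {A : Type u₁} {B : Type u₂} {C : Type u₃} [Category.{v} A] [Category.{v} B]
  [Category.{v} C]

lemma isSplitPair_of_iso {F G : A ⥤ B} (i : F ≅ G) {X Y : A} (f g : X ⟶ Y)
    [F.IsSplitPair f g] : G.IsSplitPair f g := by
  obtain ⟨Z, π, ⟨sp⟩⟩ := HasSplitCoequalizer.splittable (f := F.map f) (g := F.map g)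
  refine ⟨Z, i.inv.app Y ≫ π, ⟨
    { rightSection := sp.rightSection ≫ i.hom.app Y
      leftSection := i.inv.app Y ≫ sp.leftSection ≫ i.hom.app X
      condition := ?_
      rightSection_π := ?_
      leftSection_bottom := ?_
      leftSection_top := ?_ }⟩⟩
  · rw [i.inv.naturality_assoc, i.inv.naturality_assoc, sp.condition]
  · simp [sp.rightSection_π]
  · rw [Category.assoc, Category.assoc, ← i.hom.naturality, reassoc_of% sp.leftSection_bottom,
      Iso.inv_hom_id_app]
  · rw [Category.assoc, Category.assoc, ← i.hom.naturality, reassoc_of% sp.leftSection_top,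
      Category.assoc]

@[reducible] noncomputable def monadicOfIso {F G : A ⥤ B} (i : F ≅ G) [MonadicRightAdjoint F] :
    MonadicRightAdjoint G :=
  have : G.IsRightAdjoint := Functor.isRightAdjoint_of_iso i
  have : Monad.CreatesColimitOfIsSplitPair G := ⟨fun f g _ =>
    have := isSplitPair_of_iso i.symm f g
    have := Monad.createsGSplitCoequalizersOfMonadic F f g
    createsColimitOfNatIso i⟩
  Monad.monadicOfCreatesGSplitCoequalizers (Adjunction.ofIsRightAdjoint G)

@[reducible] noncomputable def monadicOfIsEquivalenceComp (E : A ⥤ B) [E.IsEquivalence]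
    (U : B ⥤ C) [MonadicRightAdjoint U] : MonadicRightAdjoint (E ⋙ U) :=
  have : Monad.CreatesColimitOfIsSplitPair (E ⋙ U) :=
    ⟨fun f g (_ : U.IsSplitPair (E.map f) (E.map g)) =>
      have := Monad.createsGSplitCoequalizersOfMonadic U (E.map f) (E.map g)
      have := createsColimitOfIsoDiagram U (K₁ := parallelPair (E.map f) (E.map g))
        (diagramIsoParallelPair (parallelPair f g ⋙ E)).symm
      inferInstance⟩
  Monad.monadicOfCreatesGSplitCoequalizers (Adjunction.ofIsRightAdjoint (E ⋙ U))

/-- A `G`-split pair is `V`- and `(G ⋙ V)`-split, so both functors create its coequalizer. -/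
@[reducible] noncomputable def monadicOfMonadicComp (G : A ⥤ B) (V : B ⥤ C) [G.IsRightAdjoint]
    [MonadicRightAdjoint V] [MonadicRightAdjoint (G ⋙ V)] : MonadicRightAdjoint G := by
  have createsV {X Y : A} (f g : X ⟶ Y) [G.IsSplitPair f g] :
      CreatesColimit (parallelPair f g ⋙ G) V :=
    have := Monad.createsGSplitCoequalizersOfMonadic V (G.map f) (G.map g)
    createsColimitOfIsoDiagram V (K₁ := parallelPair (G.map f) (G.map g))
      (diagramIsoParallelPair (parallelPair f g ⋙ G)).symm
  have createsGV {X Y : A} (f g : X ⟶ Y) [G.IsSplitPair f g] :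
      CreatesColimit (parallelPair f g) (G ⋙ V) :=
    have : (G ⋙ V).IsSplitPair f g :=
      inferInstanceAs (HasSplitCoequalizer (V.map (G.map f)) (V.map (G.map g)))
    Monad.createsGSplitCoequalizersOfMonadic (G ⋙ V) f g
  have hasColimitGV {X Y : A} (f g : X ⟶ Y) [G.IsSplitPair f g] :
      HasColimit (parallelPair f g ⋙ G ⋙ V) := by
    rw [hasColimit_iff_of_iso (diagramIsoParallelPair _)]
    exact inferInstanceAs (HasCoequalizer (V.map (G.map f)) (V.map (G.map g)))
  have : Monad.HasCoequalizerOfIsSplitPair G := ⟨fun f g _ =>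
    have := createsGV f g
    have := hasColimitGV f g
    hasColimit_of_created (parallelPair f g) (G ⋙ V)⟩
  have : Monad.PreservesColimitOfIsSplitPair G := ⟨fun f g _ =>
    have := createsV f g
    have := createsGV f g
    have := hasColimitGV f g
    preservesColimit_of_reflects_of_preserves G V⟩
  have : Monad.ReflectsColimitOfIsSplitPair G := ⟨fun f g _ =>
    have := createsV f g
    have := createsGV f g
    have : HasColimit ((parallelPair f g ⋙ G) ⋙ V) := hasColimitGV f g
    ⟨fun t => ⟨isColimitOfReflects (G ⋙ V) (isColimitOfPreserves V t)⟩⟩⟩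
  exact Monad.monadicOfHasPreservesReflectsGSplitCoequalizers (Adjunction.ofIsRightAdjoint G)

end Monadicity

section Pullback

variable {A : Type u₁} {B : Type u₂} {K : Type u₃}
  [Category.{v₁} A] [Category.{v₂} B] [Category.{v₃} K]

def CatPullback.sndCompIso (U : A ⥤ K) (V : B ⥤ K) :
    CatPullback.π₂ U V ⋙ V ≅ CatPullback.diag U V :=
  NatIso.ofComponents (fun X => eqToIso X.w.symm) fun {X Y} f => by
    simp only [Functor.comp_map, CatPullback.diag, CatPullback.π₁, CatPullback.π₂,
      eqToIso.hom]
    rw [← cancel_epi (eqToHom X.w), ← reassoc_of% f.w]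
    simp

end Pullback

theorem stmt2_general {K : Type u} [Category.{v} K] (h : LocallyFinitelyPresentable K)
    (T S : CategoryTheory.Monad K)
    (R : CategoryTheory.Monad K) (hR : Monad.Finitary R)
    (e : R.Algebra ≌ CatPullback T.forget S.forget)
    (he : e.functor ⋙ CatPullback.diag T.forget S.forget ≅ R.forget) :
    Nonempty (MonadicRightAdjoint (CatPullback.π₂ T.forget S.forget)) := by
  have := h.1
  have : HasColimitsOfSize.{0, 0} K := hasColimitsOfSizeShrink.{0, 0} K
  have : PreservesFilteredColimitsOfSize.{v, v} R.toFunctor := hR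
  have : PreservesFilteredColimitsOfSize.{0, 0} R.toFunctor :=
    preservesSmallestFilteredColimits_of_preservesFilteredColimits _
  have : MonadicRightAdjoint (e.inverse ⋙ R.forget) := monadicOfIsEquivalenceComp _ _
  have : MonadicRightAdjoint (CatPullback.π₂ T.forget S.forget ⋙ S.forget) :=
    monadicOfIso (CatPullback.sndCompIso _ _ ≪≫ Iso.isoInverseComp he).symm
  have : HasCoequalizers (CatPullback T.forget S.forget) :=
    Adjunction.hasColimitsOfShape_of_equivalence e.inverse
  have := isRightAdjoint_triangle_lift_monadic S.forget (R := CatPullback.π₂ T.forget S.forget)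
  exact ⟨monadicOfMonadicComp _ S.forget⟩

/-- If the coproduct `R = T ⊔ S` of two finitary monads on a locally finitely presentable
category is algebraic (i.e. `K^R` is equivalent to the pullback `K^T ×_K K^S` over `K`),
then the projection `K^T ×_K K^S ⥤ K^S` is monadic. -/
theorem stmt2 {K : Type u} [Category.{v} K] (h : LocallyFinitelyPresentable K)
    (T S : CategoryTheory.Monad K) (hT : Monad.Finitary T) (hS : Monad.Finitary S)
    (R : CategoryTheory.Monad K) (hR : Monad.Finitary R)
    (ι₁ : (⟨T, hT⟩ : ObjectProperty.FullSubcategory fun M : CategoryTheory.Monad K =>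
            Monad.Finitary M) ⟶ ⟨R, hR⟩)
    (ι₂ : (⟨S, hS⟩ : ObjectProperty.FullSubcategory fun M : CategoryTheory.Monad K =>
            Monad.Finitary M) ⟶ ⟨R, hR⟩)
    (hcoprod : Nonempty (IsColimit (BinaryCofan.mk ι₁ ι₂)))
    (e : R.Algebra ≌ CatPullback T.forget S.forget)
    (he : e.functor ⋙ CatPullback.diag T.forget S.forget ≅ R.forget) :
    Nonempty (MonadicRightAdjoint (CatPullback.π₂ T.forget S.forget)) :=
  stmt2_general h T S R hR e he

end Formal
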